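/- arXiv:1406.0057 — 2 statements merged into one kernel-verified Lean document; each statement's English description precedes it below -/
import Mathlib

section
/- Let G be a partially ordered group with analytic topological structure ≪. Suppose for each nonempty subset A of G₊, inf A exists and there is a sequence in A converging (in ≪) to inf A. Then G is regular: every decreasing sequence in G₊ converges. -/
/-- If every nonempty subset A of G₊ has an infimum which is the limit (in ≪) of a
sequence from A, then G is regular: every decreasing sequence in G₊ converges. -/
theorem stmt_14 {G : Type*} [AddCommGroup G] [PartialOrder G]
    (g1 : ∀ a b c : G, a < b → a + c < b + c)
    (ll : G → G → Prop)
    (hnonempty : ∃ x y, ll x y)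
    (t1 : ∀ x y, ll x y → x < y)
    (t2 : ∀ x y z, x ≤ y → ll y z → ll x z)
    (t3 : ∀ x y z, ll x y → ll (x + z) (y + z))
    (t4 : ∀ x, 0 ≤ x → (∀ ε, ll 0 ε → ll x ε) → x = 0)
    (t5 : ∀ ε, ll 0 ε → ∃ η, ll 0 η ∧ ll η ε)
    (hinf : ∀ A : Set G, A ⊆ {x : G | 0 ≤ x} → A.Nonempty →
      ∃ i : G, ((∀ x ∈ A, i ≤ x) ∧ ∀ c, (∀ x ∈ A, c ≤ x) → c ≤ i) ∧
        ∃ s : ℕ → G, (∀ n, s n ∈ A) ∧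
          ∀ ε, ll 0 ε → ∃ N, ∀ n > N, i ≤ s n ∧ ll (s n - i) ε) :
    ∀ a : ℕ → G, (∀ n, 0 ≤ a n) → (∀ n, a (n + 1) ≤ a n) →
      ∃ l : G, 0 ≤ l ∧ ∀ ε, ll 0 ε → ∃ N, ∀ n > N, l ≤ a n ∧ ll (a n - l) ε := by
  intro a hpos hdec
  have addle : ∀ x y c : G, x ≤ y → x + c ≤ y + c := by
    intro x y c h
    rcases eq_or_lt_of_le h with rfl | h
    · exact le_rfl
    · exact le_of_lt (g1 _ _ _ h)
  have amono : ∀ m k : ℕ, m ≤ k → a k ≤ a m := by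
    intro m k h
    induction k with
    | zero => obtain rfl := Nat.le_zero.mp h; exact le_rfl
    | succ k ih =>
      rcases Nat.lt_or_ge m (k + 1) with h' | h'
      · exact le_trans (hdec k) (ih (Nat.lt_succ_iff.mp h'))
      · obtain rfl := le_antisymm h h'
        exact le_rfl
  obtain ⟨i, ⟨hlb, hglb⟩, s, hsA, hconv⟩ :=
    hinf (Set.range a) (by rintro x ⟨n, rfl⟩; exact hpos n) ⟨a 0, 0, rfl⟩
  refine ⟨i, hglb 0 (by rintro x ⟨n, rfl⟩; exact hpos n), ?_⟩
  intro ε hε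
  obtain ⟨N, hN⟩ := hconv ε hε
  obtain ⟨m, hm⟩ := hsA (N + 1)
  have h1 := hN (N + 1) (Nat.lt_succ_self N)
  refine ⟨m, fun k hk => ⟨hlb _ ⟨k, rfl⟩, ?_⟩⟩
  have hak : a k ≤ a m := amono m k (le_of_lt hk)
  have : a k - i ≤ s (N + 1) - i := by
    rw [← hm]
    have := addle _ _ (-i) hak
    simpa [sub_eq_add_neg] using this
  exact t2 _ _ _ this h1.2
end

section
/- Let (X, d) be a complete metric space valued in a partially ordered group G with analytic topological structure ≪, and let T be a multi-valued φ-weak contraction on X satisfying the C-condition. Then T has a unique endpoint if and only if T has the approximate endpoint property. -/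
/-!
An approximate endpoint sequence `xₙ` (with `d(xₙ, x') ⪯ aₙ` for `x' ∈ Txₙ`, `aₙ → θ`) is Cauchy:
for `xₙ ≠ xₘ`, going from `xₙ` into `Txₙ`, across to `Txₘ` by the contraction, and back to `xₘ`
gives `d(xₙ, xₘ) - φ(xₙ, xₘ) ⪯ aₙ + aₘ`, so the C-condition forces `d(xₙ, xₘ) → θ`.
Its limit `p` is an endpoint, since every `y ∈ Tp` satisfies `d(p, y) ⪯ 2 d(xₙ, p) + aₙ → θ`,
and two endpoints `p ≠ q` would give `d(p, q) ⪯ φ(p, q) ≺ d(p, q)`.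
-/

section

variable {G : Type*} [AddCommGroup G]

def ConvergesToZero (ll : G → G → Prop) (a : ℕ → G) : Prop :=
  ∀ ε, ll 0 ε → ∃ N, ∀ n > N, ll (a n) ε

theorem ConvergesToZero.comp {ll : G → G → Prop} {a : ℕ → G} (ha : ConvergesToZero ll a)
    {s : ℕ → ℕ} (hs : ∀ k, k ≤ s k) : ConvergesToZero ll (a ∘ s) :=
  fun ε hε => (ha ε hε).imp fun _ hN k hk => hN (s k) (lt_of_lt_of_le hk (hs k))

variable [PartialOrder G]

theorem IsOrderedAddMonoid.of_add_lt_add_right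
    (h : ∀ a b c : G, a < b → a + c < b + c) : IsOrderedAddMonoid G where
  add_le_add_left _ _ hab c := StrictMono.monotone (fun _ _ hxy => h _ _ c hxy) hab

/-- `ll x y` stands for `x ≪ y`. -/
structure IsAnalyticStructure (ll : G → G → Prop) : Prop where
  lt : ∀ x y, ll x y → x < y
  of_le : ∀ x y z, x ≤ y → ll y z → ll x z
  add_right : ∀ x y z, ll x y → ll (x + z) (y + z)
  eq_zero : ∀ x, 0 ≤ x → (∀ ε, ll 0 ε → ll x ε) → x = 0
  exists_between : ∀ ε, ll 0 ε → ∃ η, ll 0 η ∧ ll η ε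

namespace ConvergesToZero

variable {ll : G → G → Prop} {a b : ℕ → G}

theorem of_le (hll : IsAnalyticStructure ll) (hba : ∀ n, b n ≤ a n)
    (ha : ConvergesToZero ll a) : ConvergesToZero ll b :=
  fun ε hε => (ha ε hε).imp fun _ hN n hn => hll.of_le _ _ _ (hba n) (hN n hn)

theorem add [IsOrderedAddMonoid G] (hll : IsAnalyticStructure ll) (ha : ConvergesToZero ll a)
    (hb : ConvergesToZero ll b) : ConvergesToZero ll (a + b) := by
  intro ε hε
  obtain ⟨η, hη, hηε⟩ := hll.exists_between ε hε
  have hεη : ll 0 (ε - η) := by simpa [sub_eq_add_neg] using hll.add_right η ε (-η) hηε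
  obtain ⟨N₁, hN₁⟩ := ha η hη
  obtain ⟨N₂, hN₂⟩ := hb (ε - η) hεη
  refine ⟨max N₁ N₂, fun n hn => ?_⟩
  -- `aₙ + bₙ ⪯ bₙ + η ≪ (ε - η) + η = ε`
  have hle : a n + b n ≤ b n + η := by
    rw [add_comm (b n)]
    exact add_le_add_left (hll.lt _ _ (hN₁ n (lt_of_le_of_lt (le_max_left _ _) hn))).le _
  have hlt : ll (b n + η) ε := by
    simpa using hll.add_right _ _ η (hN₂ n (lt_of_le_of_lt (le_max_right _ _) hn))
  exact hll.of_le _ _ _ hle hlt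

theorem eq_zero_of_le (hll : IsAnalyticStructure ll) {c : G} (hc : 0 ≤ c) (hca : ∀ n, c ≤ a n)
    (ha : ConvergesToZero ll a) : c = 0 :=
  hll.eq_zero c hc fun ε hε =>
    let ⟨N, hN⟩ := ha ε hε
    hll.of_le _ _ _ (hca (N + 1)) (hN (N + 1) N.lt_succ_self)

end ConvergesToZero

section Metric

variable {X : Type*}

structure IsGroupMetric (d : X → X → G) : Prop where
  nonneg : ∀ x y, 0 ≤ d x y
  eq_zero_iff : ∀ x y, d x y = 0 ↔ x = y
  symm : ∀ x y, d x y = d y x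
  triangle : ∀ x y z, d x y ≤ d x z + d z y

theorem IsGroupMetric.pos_of_ne {d : X → X → G} (hd : IsGroupMetric d) {x y : X} (hxy : x ≠ y) :
    0 < d x y :=
  (hd.nonneg x y).lt_of_ne fun h => hxy ((hd.eq_zero_iff x y).1 h.symm)

structure IsPhiWeakContraction (d : X → X → G) (T : X → Set X) (φ : X → X → G) : Prop where
  phi_lt : ∀ x y, 0 < d x y → φ x y < d x y
  exists_dist_le : ∀ x y, x ≠ y → ∀ x' ∈ T x, ∃ y' ∈ T y, d x' y' ≤ φ x y

/-- The C-condition, with convergence of `d - φ` to `θ` taken in `G₊`. -/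
def CCondition (ll : G → G → Prop) (d φ : X → X → G) : Prop :=
  ∀ x y : ℕ → X,
    (∀ ε, ll 0 ε → ∃ N, ∀ n > N, 0 ≤ d (x n) (y n) - φ (x n) (y n) ∧
      ll (d (x n) (y n) - φ (x n) (y n)) ε) →
    ConvergesToZero ll fun n => d (x n) (y n)

theorem IsPhiWeakContraction.eq_of_endpoints {d : X → X → G} {T : X → Set X} {φ : X → X → G}
    (hTφ : IsPhiWeakContraction d T φ) (hd : IsGroupMetric d) {p q : X}
    (hp : T p = {p}) (hq : T q = {q}) : p = q := by
  by_contra hpq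
  obtain ⟨y, hy, hpy⟩ := hTφ.exists_dist_le p q hpq p (hp ▸ rfl)
  rw [hq, Set.mem_singleton_iff] at hy
  subst hy
  exact (hpy.trans_lt (hTφ.phi_lt p y (hd.pos_of_ne hpq))).false

variable [IsOrderedAddMonoid G] {ll : G → G → Prop} {d : X → X → G} {T : X → Set X}
  {φ : X → X → G}

namespace IsPhiWeakContraction

theorem dist_le_add_add (hTφ : IsPhiWeakContraction d T φ) (hd : IsGroupMetric d) {x y : X}
    (hxy : x ≠ y) (hTx : (T x).Nonempty) {a b : G} (ha : ∀ x' ∈ T x, d x x' ≤ a)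
    (hb : ∀ y' ∈ T y, d y y' ≤ b) : d x y ≤ a + φ x y + b := by
  obtain ⟨x', hx'⟩ := hTx
  obtain ⟨y', hy', hx'y'⟩ := hTφ.exists_dist_le x y hxy x' hx'
  calc d x y ≤ d x x' + (d x' y' + d y' y) :=
        (hd.triangle _ _ _).trans (add_le_add_right (hd.triangle _ _ _) _)
    _ ≤ a + (φ x y + b) := add_le_add (ha x' hx') (add_le_add hx'y' (hd.symm y' y ▸ hb y' hy'))
    _ = a + φ x y + b := (add_assoc _ _ _).symm

theorem dist_le_of_mem (hTφ : IsPhiWeakContraction d T φ) (hd : IsGroupMetric d) {x p y : X}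
    {a : G} (ha : ∀ x' ∈ T x, d x x' ≤ a) (hy : y ∈ T p) : d p y ≤ d x p + d x p + a := by
  rcases eq_or_ne p x with rfl | hpx
  · calc d p y ≤ a := ha y hy
      _ ≤ d p p + d p p + a := le_add_of_nonneg_left (add_nonneg (hd.nonneg p p) (hd.nonneg p p))
  obtain ⟨z, hz, hyz⟩ := hTφ.exists_dist_le p x hpx y hy
  have hφ : φ p x ≤ d x p := hd.symm x p ▸ (hTφ.phi_lt p x (hd.pos_of_ne hpx)).le
  calc d p y ≤ d p x + (d x z + d z y) :=
        (hd.triangle _ _ _).trans (add_le_add_right (hd.triangle _ _ _) _)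
    _ ≤ d x p + (a + d x p) :=
        add_le_add (hd.symm p x ▸ le_rfl) (add_le_add (ha z hz) (hd.symm y z ▸ hyz.trans hφ))
    _ = d x p + d x p + a := by abel

variable {xs : ℕ → X} {as : ℕ → G}

theorem cauchy_of_approx_endpoint (hTφ : IsPhiWeakContraction d T φ) (hll : IsAnalyticStructure ll)
    (hd : IsGroupMetric d) (hC : CCondition ll d φ) (hT : ∀ n, (T (xs n)).Nonempty)
    (has : ConvergesToZero ll as) (hbd : ∀ n, ∀ y ∈ T (xs n), d (xs n) y ≤ as n) :
    ∀ ε, ll 0 ε → ∃ N, ∀ n > N, ∀ m > N, ll (d (xs n) (xs m)) ε := by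
  by_contra! hcontra
  obtain ⟨ε₀, hε₀, hbad⟩ := hcontra
  choose n hn m hm hnm using hbad
  have hne : ∀ k, xs (n k) ≠ xs (m k) := fun k h =>
    hnm k (((hd.eq_zero_iff _ _).2 h).symm ▸ hε₀)
  have hgap : ∀ k, d (xs (n k)) (xs (m k)) - φ (xs (n k)) (xs (m k)) ≤ as (n k) + as (m k) :=
    fun k => sub_le_iff_le_add.2 <| (hTφ.dist_le_add_add hd (hne k) (hT _) (hbd _) (hbd _)).trans
      (add_right_comm _ _ _).le
  have hgap_lim : ConvergesToZero ll
      fun k => d (xs (n k)) (xs (m k)) - φ (xs (n k)) (xs (m k)) :=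
    ((has.comp fun k => (hn k).le).add hll (has.comp fun k => (hm k).le)).of_le hll hgap
  obtain ⟨N, hN⟩ := hC _ _ (fun ε hε => (hgap_lim ε hε).imp fun _ h k hk =>
    ⟨sub_nonneg.2 (hTφ.phi_lt _ _ (hd.pos_of_ne (hne k))).le, h k hk⟩) ε₀ hε₀
  exact hnm (N + 1) (hN (N + 1) N.lt_succ_self)

theorem endpoint_of_tendsto (hTφ : IsPhiWeakContraction d T φ) (hll : IsAnalyticStructure ll)
    (hd : IsGroupMetric d) {p : X} (hTp : (T p).Nonempty) (has : ConvergesToZero ll as)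
    (hbd : ∀ n, ∀ y ∈ T (xs n), d (xs n) y ≤ as n)
    (hp : ConvergesToZero ll fun n => d (xs n) p) : T p = {p} := by
  refine (hTp.subset_singleton_iff).1 fun y hy => ?_
  have hpy : d p y = 0 :=
    ((hp.add hll hp).add hll has).eq_zero_of_le hll (hd.nonneg p y)
      fun k => hTφ.dist_le_of_mem hd (hbd k) hy
  exact ((hd.eq_zero_iff p y).1 hpy).symm

end IsPhiWeakContraction

end Metric

end

theorem stmt_17_general {G : Type*} [AddCommGroup G] [PartialOrder G]
    (g1 : ∀ a b c : G, a < b → a + c < b + c)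
    (ll : G → G → Prop)
    (t1 : ∀ x y, ll x y → x < y)
    (t2 : ∀ x y z, x ≤ y → ll y z → ll x z)
    (t3 : ∀ x y z, ll x y → ll (x + z) (y + z))
    (t4 : ∀ x, 0 ≤ x → (∀ ε, ll 0 ε → ll x ε) → x = 0)
    (t5 : ∀ ε, ll 0 ε → ∃ η, ll 0 η ∧ ll η ε)
    {X : Type*} (d : X → X → G)
    (d1 : ∀ x y, 0 ≤ d x y) (d1' : ∀ x y, d x y = 0 ↔ x = y)
    (d2 : ∀ x y, d x y = d y x)
    (d3 : ∀ x y z, d x y ≤ d x z + d z y)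
    -- completeness: every Cauchy sequence converges
    (hcomplete : ∀ x : ℕ → X,
      (∀ ε, ll 0 ε → ∃ N, ∀ n > N, ∀ m > N, ll (d (x n) (x m)) ε) →
      ∃ p : X, ∀ ε, ll 0 ε → ∃ N, ∀ n > N, ll (d (x n) p) ε)
    (T : X → Set X) (hT : ∀ x, (T x).Nonempty)
    (φ : X → X → G)
    (hφ : ∀ x y, 0 < d x y → φ x y < d x y)
    (hcontr : ∀ x y, x ≠ y → ∀ x' ∈ T x, ∃ y' ∈ T y, d x' y' ≤ φ x y)
    -- C-condition
    (hC : ∀ x y : ℕ → X,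
      (∀ ε, ll 0 ε → ∃ N, ∀ n > N, 0 ≤ d (x n) (y n) - φ (x n) (y n) ∧
        ll (d (x n) (y n) - φ (x n) (y n)) ε) →
      ∀ ε, ll 0 ε → ∃ N, ∀ n > N, ll (d (x n) (y n)) ε) :
    (∃! x : X, T x = {x}) ↔
    (∃ (xs : ℕ → X) (as : ℕ → G), (∀ n, 0 ≤ as n) ∧
      (∀ ε, ll 0 ε → ∃ N, ∀ n > N, 0 ≤ as n ∧ ll (as n) ε) ∧
      ∀ n, ∀ y ∈ T (xs n), d (xs n) y ≤ as n) := by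
  have := IsOrderedAddMonoid.of_add_lt_add_right g1
  have hll : IsAnalyticStructure ll := ⟨t1, t2, t3, t4, t5⟩
  have hd : IsGroupMetric d := ⟨d1, d1', d2, d3⟩
  have hTφ : IsPhiWeakContraction d T φ := ⟨hφ, hcontr⟩
  constructor
  · rintro ⟨x, hx, -⟩
    refine ⟨fun _ => x, 0, fun _ => le_rfl, fun ε hε => ⟨0, fun _ _ => ⟨le_rfl, hε⟩⟩, ?_⟩
    intro _ y hy
    rw [hx, Set.mem_singleton_iff] at hy
    exact hy ▸ ((d1' x x).2 rfl).le
  · rintro ⟨xs, as, -, hasto, hbd⟩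
    have has : ConvergesToZero ll as := fun ε hε => (hasto ε hε).imp fun _ h n hn => (h n hn).2
    obtain ⟨p, hp⟩ := hcomplete xs (hTφ.cauchy_of_approx_endpoint hll hd hC (fun _ => hT _) has hbd)
    have hTp : T p = {p} := hTφ.endpoint_of_tendsto hll hd (hT p) has hbd hp
    exact ⟨p, hTp, fun q hTq => hTφ.eq_of_endpoints hd hTq hTp⟩

/-- Endpoint theorem: a multi-valued φ-weak contraction on a complete metric space
valued in a partially ordered group, satisfying the C-condition, has a unique endpoint
iff it has the approximate endpoint property. -/
theorem stmt_17 {G : Type*} [AddCommGroup G] [PartialOrder G]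
    (g1 : ∀ a b c : G, a < b → a + c < b + c)
    (ll : G → G → Prop)
    (hnonempty : ∃ x y, ll x y)
    (t1 : ∀ x y, ll x y → x < y)
    (t2 : ∀ x y z, x ≤ y → ll y z → ll x z)
    (t3 : ∀ x y z, ll x y → ll (x + z) (y + z))
    (t4 : ∀ x, 0 ≤ x → (∀ ε, ll 0 ε → ll x ε) → x = 0)
    (t5 : ∀ ε, ll 0 ε → ∃ η, ll 0 η ∧ ll η ε)
    {X : Type*} (d : X → X → G)
    (d1 : ∀ x y, 0 ≤ d x y) (d1' : ∀ x y, d x y = 0 ↔ x = y)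
    (d2 : ∀ x y, d x y = d y x)
    (d3 : ∀ x y z, d x y ≤ d x z + d z y)
    -- completeness: every Cauchy sequence converges
    (hcomplete : ∀ x : ℕ → X,
      (∀ ε, ll 0 ε → ∃ N, ∀ n > N, ∀ m > N, ll (d (x n) (x m)) ε) →
      ∃ p : X, ∀ ε, ll 0 ε → ∃ N, ∀ n > N, ll (d (x n) p) ε)
    (T : X → Set X) (hT : ∀ x, (T x).Nonempty)
    (φ : X → X → G) (hφ0 : ∀ x y, 0 ≤ φ x y)
    (hφ : ∀ x y, 0 < d x y → φ x y < d x y)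
    (hcontr : ∀ x y, x ≠ y → ∀ x' ∈ T x, ∃ y' ∈ T y, d x' y' ≤ φ x y)
    -- C-condition
    (hC : ∀ x y : ℕ → X,
      (∀ ε, ll 0 ε → ∃ N, ∀ n > N, 0 ≤ d (x n) (y n) - φ (x n) (y n) ∧
        ll (d (x n) (y n) - φ (x n) (y n)) ε) →
      ∀ ε, ll 0 ε → ∃ N, ∀ n > N, ll (d (x n) (y n)) ε) :
    (∃! x : X, T x = {x}) ↔
    (∃ (xs : ℕ → X) (as : ℕ → G), (∀ n, 0 ≤ as n) ∧
      (∀ ε, ll 0 ε → ∃ N, ∀ n > N, 0 ≤ as n ∧ ll (as n) ε) ∧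
      ∀ n, ∀ y ∈ T (xs n), d (xs n) y ≤ as n) :=
  stmt_17_general g1 ll t1 t2 t3 t4 t5 d d1 d1' d2 d3 hcomplete T hT φ hφ hcontr hC
end
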